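/- The population gradient of the log-likelihood of the truncated linear regression model satisfies ∇ℓ̄(w) = (1/n)·Σ_{i=1}^n E_{y ~ N(⟨w*,x^(i)⟩,1,S)}[y]·x^(i) − (1/n)·Σ_{i=1}^n E_{z ~ N(⟨w,x^(i)⟩,1,S)}[z]·x^(i), for every w ∈ ℝ^k, provided S has positive Gaussian mass under every mean ⟨w,x^(i)⟩ and ⟨w*,x^(i)⟩. -/

import Mathlib

open MeasureTheory ProbabilityTheory Real
open scoped RealInnerProductSpace ENNReal

/-- The survival probability `α(μ; S) = N(μ,1)(S)`. -/
noncomputable def survival (μ : ℝ) (S : Set ℝ) : ℝ :=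
  (gaussianReal μ 1 S).toReal

/-- The truncated Gaussian `N(μ,1,S)`, i.e. `N(μ,1)` conditioned on `S`. -/
noncomputable def truncGaussian (μ : ℝ) (S : Set ℝ) : Measure ℝ :=
  (gaussianReal μ 1)[|S]

/-- The population log-likelihood of the truncated linear regression model. -/
noncomputable def popLogLik {k n : ℕ} (S : Set ℝ) (x : Fin n → EuclideanSpace ℝ (Fin k))
    (wstar : EuclideanSpace ℝ (Fin k)) (w : EuclideanSpace ℝ (Fin k)) : ℝ :=
  (1 / n : ℝ) * ∑ i, ∫ y, (-(1 / 2) * (y - ⟪w, x i⟫) ^ 2 -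
      Real.log (∫ z in S, Real.exp (-(z - ⟪w, x i⟫) ^ 2 / 2)))
    ∂(truncGaussian ⟪wstar, x i⟫ S)

/-!
For `ν = N(a,1,S)`, the expected log-likelihood of one sample at mean `t` is
`-(1/2) E_ν[(y - t)²] - log Z(t)` with `Z(t) = ∫_S exp(-(z - t)²/2) dz`. The first term is a
quadratic in `t` with derivative `E_ν[y] - t`. Differentiating `Z` under the integral sign (for
`|s - t| < 1` the derivative of the integrand is dominated by a Gaussian tail) gives
`Z'(t) / Z(t) = E_{N(t,1,S)}[z - t]`, so the derivative in `t` is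
`E_{N(a,1,S)}[y] - E_{N(t,1,S)}[z]`. The chain rule through `t = ⟪w, x i⟫` and averaging over `i`
give the gradient.
-/

open scoped NNReal

section TruncatedGaussian

variable (S : Set ℝ) (t : ℝ)

lemma setIntegral_gaussianReal_one (f : ℝ → ℝ) :
    ∫ z in S, f z ∂gaussianReal t 1 =
      (√(2 * π))⁻¹ * ∫ z in S, f z * rexp (-(z - t) ^ 2 / 2) := by
  rw [gaussianReal_of_var_ne_zero _ one_ne_zero,
    setIntegral_withDensity_eq_setIntegral_toReal_smul' S (measurable_gaussianPDF t 1)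
      (ae_of_all _ fun _ => ENNReal.ofReal_lt_top), ← integral_const_mul]
  simp only [toReal_gaussianPDF, gaussianPDFReal, smul_eq_mul, NNReal.coe_one, mul_one]
  congr 1 with z
  ring

lemma survival_eq_mul_setIntegral :
    survival t S = (√(2 * π))⁻¹ * ∫ z in S, rexp (-(z - t) ^ 2 / 2) := by
  have := setIntegral_gaussianReal_one S t fun _ => 1
  simp only [setIntegral_const, smul_eq_mul, mul_one, one_mul] at this
  rw [survival, ← measureReal_def, this]

lemma integral_truncGaussian (f : ℝ → ℝ) :
    ∫ y, f y ∂truncGaussian t S =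
      (∫ z in S, f z * rexp (-(z - t) ^ 2 / 2)) / ∫ z in S, rexp (-(z - t) ^ 2 / 2) := by
  rw [truncGaussian, ProbabilityTheory.cond, integral_smul_measure, ENNReal.toReal_inv,
    setIntegral_gaussianReal_one, ← survival, survival_eq_mul_setIntegral, smul_eq_mul]
  have : (√(2 * π))⁻¹ ≠ 0 := by positivity
  field_simp

variable {S t}

lemma gaussianReal_ne_zero_of_survival_pos (h : 0 < survival t S) : gaussianReal t 1 S ≠ 0 :=
  fun h0 => by simp [survival, h0] at h

lemma isProbabilityMeasure_truncGaussian (h : 0 < survival t S) :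
    IsProbabilityMeasure (truncGaussian t S) :=
  cond_isProbabilityMeasure (gaussianReal_ne_zero_of_survival_pos h)

lemma memLp_id_truncGaussian (h : 0 < survival t S) (p : ℝ≥0) :
    MemLp id p (truncGaussian t S) :=
  ((memLp_id_gaussianReal p).restrict S).smul_measure
    (ENNReal.inv_ne_top.2 (gaussianReal_ne_zero_of_survival_pos h))

lemma integrable_id_truncGaussian (h : 0 < survival t S) : Integrable id (truncGaussian t S) :=
  memLp_one_iff_integrable.1 (memLp_id_truncGaussian h 1)

end TruncatedGaussian

lemma exp_neg_sq_sub_div_two_le {x t : ℝ} (hx : |x - t| ≤ 1) (z : ℝ) :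
    rexp (-(z - x) ^ 2 / 2) ≤ rexp 1 * rexp (-(1 / 4) * (z - t) ^ 2) := by
  rw [← Real.exp_add, Real.exp_le_exp]
  have : (x - t) ^ 2 ≤ 1 := by nlinarith [abs_nonneg (x - t), sq_abs (x - t)]
  nlinarith [sq_nonneg (z - t - 2 * (x - t))]

lemma integrable_exp_neg_sq_sub_div_two (t : ℝ) :
    Integrable fun z => rexp (-(z - t) ^ 2 / 2) := by
  convert (integrable_exp_neg_mul_sq (b := 1 / 2) (by norm_num)).comp_sub_right t using 2
  ring_nf

lemma hasDerivAt_exp_neg_sq_sub (z x : ℝ) :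
    HasDerivAt (fun s => rexp (-(z - s) ^ 2 / 2)) ((z - x) * rexp (-(z - x) ^ 2 / 2)) x := by
  have h : HasDerivAt (fun s => -(z - s) ^ 2 / 2) (z - x) x :=
    ((((hasDerivAt_id' x).const_sub z).fun_pow 2).fun_neg.div_const 2).congr_deriv (by ring)
  exact h.exp.congr_deriv (mul_comm _ _)

lemma hasDerivAt_setIntegral_exp_neg_sq_sub (S : Set ℝ) (t : ℝ) :
    HasDerivAt (fun s => ∫ z in S, rexp (-(z - s) ^ 2 / 2))
      (∫ z in S, (z - t) * rexp (-(z - t) ^ 2 / 2)) t := by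
  have hb : (0 : ℝ) < 1 / 4 := by norm_num
  have hbound :
      Integrable fun z => rexp 1 * ((|z - t| + 1) * rexp (-(1 / 4) * (z - t) ^ 2)) := by
    refine Integrable.const_mul ?_ _
    convert ((integrable_mul_exp_neg_mul_sq hb).norm.add
      (integrable_exp_neg_mul_sq hb)).comp_sub_right t using 2 with z
    simp only [Pi.add_apply, norm_mul, Real.norm_eq_abs, Real.abs_exp]
    ring
  refine (hasDerivAt_integral_of_dominated_loc_of_deriv_le
    (F := fun s z => rexp (-(z - s) ^ 2 / 2)) (F' := fun s z => (z - s) * rexp (-(z - s) ^ 2 / 2))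
    (Metric.ball_mem_nhds t one_pos)
    (Filter.Eventually.of_forall fun s => (Continuous.aestronglyMeasurable (by fun_prop)).restrict)
    (integrable_exp_neg_sq_sub_div_two t).integrableOn
    (Continuous.aestronglyMeasurable (by fun_prop)).restrict ?_ hbound.integrableOn ?_).2
  · refine ae_of_all _ fun z x hx => ?_
    rw [Metric.mem_ball, Real.dist_eq] at hx
    rw [norm_mul, Real.norm_eq_abs, Real.norm_of_nonneg (Real.exp_nonneg _), mul_left_comm]
    gcongr
    · calc |z - x| = |(z - t) - (x - t)| := by ring_nf
        _ ≤ |z - t| + 1 := by linarith [abs_sub (z - t) (x - t)]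
    · exact exp_neg_sq_sub_div_two_le hx.le z
  · exact ae_of_all _ fun z x _ => hasDerivAt_exp_neg_sq_sub z x

lemma hasDerivAt_integral_sub_sq {ν : Measure ℝ} [IsProbabilityMeasure ν] (h : MemLp id 2 ν)
    (t : ℝ) :
    HasDerivAt (fun s => ∫ y, (y - s) ^ 2 ∂ν) (2 * (t - ∫ y, y ∂ν)) t := by
  have hint : Integrable (fun y : ℝ => y) ν :=
    memLp_one_iff_integrable.1 (h.mono_exponent one_le_two)
  have hsq : Integrable (fun y : ℝ => y ^ 2) ν := h.integrable_sq
  have expand (s : ℝ) :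
      ∫ y, (y - s) ^ 2 ∂ν = ∫ y, y ^ 2 ∂ν - 2 * s * ∫ y, y ∂ν + s ^ 2 := by
    calc ∫ y, (y - s) ^ 2 ∂ν = ∫ y, (y ^ 2 - 2 * s * y + s ^ 2) ∂ν := by
          congr 1 with y; ring
      _ = _ := by
        rw [integral_add ?_ (integrable_const _), integral_sub hsq (hint.const_mul _),
          integral_const_mul]
        · simp
        · exact hsq.sub (hint.const_mul _)
  simp_rw [expand]
  exact ((((hasDerivAt_id' t).const_mul 2).mul_const _).const_sub _).fun_add
    (hasDerivAt_pow 2 t) |>.congr_deriv (by ring)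

section LogLikelihood

variable {S : Set ℝ}

lemma hasDerivAt_log_setIntegral_exp_neg_sq_sub {t : ℝ} (h : 0 < survival t S) :
    HasDerivAt (fun s => Real.log (∫ z in S, rexp (-(z - s) ^ 2 / 2)))
      ((∫ z, z ∂truncGaussian t S) - t) t := by
  have hZ : (∫ z in S, rexp (-(z - t) ^ 2 / 2)) ≠ 0 := by
    rw [survival_eq_mul_setIntegral] at h
    exact (pos_of_mul_pos_right h (by positivity)).ne'
  have := isProbabilityMeasure_truncGaussian h
  have hmean : (∫ z in S, (z - t) * rexp (-(z - t) ^ 2 / 2)) / ∫ z in S, rexp (-(z - t) ^ 2 / 2)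
      = (∫ z, z ∂truncGaussian t S) - t := by
    rw [← integral_truncGaussian,
      integral_sub (f := fun z => z) (integrable_id_truncGaussian h) (integrable_const t)]
    simp
  exact ((hasDerivAt_setIntegral_exp_neg_sq_sub S t).log hZ).congr_deriv hmean

lemma hasDerivAt_integral_truncGaussian_logLik {a b : ℝ} (ha : 0 < survival a S)
    (hb : 0 < survival b S) :
    HasDerivAt (fun s => ∫ y, (-(1 / 2) * (y - s) ^ 2 -
        Real.log (∫ z in S, rexp (-(z - s) ^ 2 / 2))) ∂truncGaussian a S)
      ((∫ y, y ∂truncGaussian a S) - ∫ z, z ∂truncGaussian b S) b := by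
  have := isProbabilityMeasure_truncGaussian ha
  have hL2 := memLp_id_truncGaussian ha 2
  have split (s : ℝ) : ∫ y, (-(1 / 2) * (y - s) ^ 2 -
        Real.log (∫ z in S, rexp (-(z - s) ^ 2 / 2))) ∂truncGaussian a S
      = -(1 / 2) * ∫ y, (y - s) ^ 2 ∂truncGaussian a S
          - Real.log (∫ z in S, rexp (-(z - s) ^ 2 / 2)) := by
    rw [integral_sub ?_ (integrable_const _), integral_const_mul]
    · simp
    · exact (hL2.sub (memLp_const s)).integrable_sq.const_mul _
  simp_rw [split]
  exact (((hasDerivAt_integral_sub_sq hL2 b).const_mul _).sub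
    (hasDerivAt_log_setIntegral_exp_neg_sq_sub hb)).congr_deriv (by ring)

end LogLikelihood

theorem stmt10 {k n : ℕ} (S : Set ℝ)
    (x : Fin n → EuclideanSpace ℝ (Fin k)) (wstar w : EuclideanSpace ℝ (Fin k))
    (hposw : ∀ i, 0 < survival ⟪w, x i⟫ S)
    (hposstar : ∀ i, 0 < survival ⟪wstar, x i⟫ S) :
    HasGradientAt (popLogLik S x wstar)
      ((1 / n : ℝ) • ∑ i, (∫ y, y ∂(truncGaussian ⟪wstar, x i⟫ S)) • x i -
        (1 / n : ℝ) • ∑ i, (∫ z, z ∂(truncGaussian ⟪w, x i⟫ S)) • x i) w := by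
  have hterm (i : Fin n) := (hasDerivAt_integral_truncGaussian_logLik (hposstar i)
    (hposw i)).comp_hasFDerivAt w (innerSLFlip ℝ (x i)).hasFDerivAt
  rw [hasGradientAt_iff_hasFDerivAt]
  refine ((HasFDerivAt.fun_sum (u := Finset.univ) fun i _ => hterm i).const_mul
    (1 / n : ℝ)).congr_fderiv ?_
  ext v
  simp only [one_div, smul_apply, sum_apply, smul_eq_mul, sub_mul, Finset.sum_sub_distrib, mul_sub,
    map_sub, map_smul, map_sum, sub_apply, InnerProductSpace.toDual_apply_apply, real_inner_comm]
  rfl
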